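/- Let n, k satisfy 4 ≤ 2k ≤ n and let G be a collection of subsets of [n], each of size at most k. Then F(n,k,G) is intersecting if and only if every pair G, H ∈ G (possibly equal) is strongly intersecting. -/

import Mathlib

open Finset

/-- 1-indexed i-th smallest element of a finset of naturals (0 if out of range). -/
def nth (A : Finset ℕ) (i : ℕ) : ℕ := (A.sort (· ≤ ·)).getD (i - 1) 0

/-- Elementwise order on finsets of equal size: `A ≤ B`. -/
def eLE (A B : Finset ℕ) : Prop :=
  A.card = B.card ∧ ∀ i, 1 ≤ i → i ≤ B.card → nth A i ≤ nth B i

/-- `A ⪯ B`: `|A| ≥ |B|` and the i-th smallest of `A` is ≤ the i-th smallest of `B` for `i ≤ |B|`. -/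
def preceq (A B : Finset ℕ) : Prop :=
  B.card ≤ A.card ∧ ∀ i, 1 ≤ i → i ≤ B.card → nth A i ≤ nth B i

/-- `μ_X(l) = |X ∩ [l]|`. -/
def mu (X : Finset ℕ) (l : ℕ) : ℕ := (X ∩ Finset.Icc 1 l).card

/-- `G ∼_si H` (within `[n]`): every `G' ≤ G` and `H' ≤ H` with `G', H' ⊆ [n]` intersect. -/
def sInt (n : ℕ) (G H : Finset ℕ) : Prop :=
  ∀ G' H' : Finset ℕ, G' ⊆ Finset.Icc 1 n → H' ⊆ Finset.Icc 1 n →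
    eLE G' G → eLE H' H → (G' ∩ H').Nonempty

/-- `F(n,k,𝒢)`: the k-subsets `S` of `[n]` with `S ⪯ G` for some `G ∈ 𝒢`. -/
def Fam (n k : ℕ) (𝒢 : Set (Finset ℕ)) : Set (Finset ℕ) :=
  {S | S ⊆ Finset.Icc 1 n ∧ S.card = k ∧ ∃ G ∈ 𝒢, preceq S G}

/-- A family is intersecting if every two members (possibly equal) intersect. -/
def IsIntersecting (𝒜 : Set (Finset ℕ)) : Prop :=
  ∀ A ∈ 𝒜, ∀ B ∈ 𝒜, (A ∩ B).Nonempty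

/-- The type of `G`: the largest `r` with `g_r < k + r`. -/
def typeOf (k : ℕ) (G : Finset ℕ) : ℕ :=
  ((Finset.range (G.card + 1)).filter fun r => 1 ≤ r ∧ nth G r < k + r).sup id

/-- `π(G) = {g_1, …, g_r}` where `r` is the type of `G`. -/
def piG (k : ℕ) (G : Finset ℕ) : Finset ℕ :=
  ((G.sort (· ≤ ·)).take (typeOf k G)).toFinset

/-!
If some `G' ≤ G` and `H' ≤ H` were disjoint, then, as `2k ≤ n`, they extend to disjoint
`k`-subsets of `[n]`, and a superset `S ⊇ G'` satisfies `S ⪯ G` because the `i`-th smallest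
element can only decrease when elements are added. Conversely, the `|G|` smallest elements of any
`S ⪯ G` form a set `S' ≤ G`, so strong intersection of the generators makes `F(n,k,𝒢)`
intersecting.
-/

lemma nth_eq_getElem (s : Finset ℕ) {i : ℕ} (h1 : 1 ≤ i) (h2 : i ≤ s.card) :
    nth s i = (s.sort (· ≤ ·))[i - 1]'(by rw [length_sort]; omega) :=
  List.getD_eq_getElem _ _ _

lemma nth_le_of_le_card_filter (s : Finset ℕ) {x i : ℕ} (h1 : 1 ≤ i)
    (h2 : i ≤ (s.filter (· ≤ x)).card) : nth s i ≤ x := by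
  have hcard : i ≤ s.card := h2.trans (card_le_card (filter_subset _ _))
  have hlen : (s.sort (· ≤ ·)).length = s.card := length_sort _
  rw [nth_eq_getElem s h1 hcard]
  by_contra! hlt
  -- then every element `≤ x` sits among the first `i - 1` sorted elements
  have hsub : s.filter (· ≤ x) ⊆ ((s.sort (· ≤ ·)).take (i - 1)).toFinset := by
    intro y hy
    obtain ⟨hys, hyx⟩ := mem_filter.1 hy
    obtain ⟨j, hj, rfl⟩ := List.getElem_of_mem ((mem_sort (· ≤ ·)).2 hys)
    rw [List.mem_toFinset, List.mem_take_iff_getElem]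
    refine ⟨j, ?_, rfl⟩
    by_contra! hji
    have := (s.pairwise_sort (· ≤ ·)).rel_get_of_le
      (a := ⟨i - 1, by omega⟩) (b := ⟨j, hj⟩) (by simp only [Fin.mk_le_mk]; omega)
    simp only [List.get_eq_getElem] at this
    omega
  have := (card_le_card hsub).trans (List.toFinset_card_le _)
  rw [List.length_take] at this
  omega

lemma le_card_filter_le_nth (s : Finset ℕ) {i : ℕ} (h1 : 1 ≤ i) (h2 : i ≤ s.card) :
    i ≤ (s.filter (· ≤ nth s i)).card := by
  have hlen : (s.sort (· ≤ ·)).length = s.card := length_sort _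
  have hsub : ((s.sort (· ≤ ·)).take i).toFinset ⊆ s.filter (· ≤ nth s i) := by
    intro y hy
    rw [List.mem_toFinset] at hy
    refine mem_filter.2 ⟨(mem_sort _).1 (List.mem_of_mem_take hy), ?_⟩
    obtain ⟨j, hj, rfl⟩ := List.mem_take_iff_getElem.1 hy
    rw [nth_eq_getElem s h1 h2]
    exact (s.pairwise_sort (· ≤ ·)).rel_get_of_le
      (a := ⟨j, by omega⟩) (b := ⟨i - 1, by omega⟩) (by simp only [Fin.mk_le_mk]; omega)
  have hcard : ((s.sort (· ≤ ·)).take i).toFinset.card = i := by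
    rw [List.toFinset_card_of_nodup ((s.sort_nodup _).sublist (List.take_sublist _ _)),
      List.length_take]
    omega
  exact hcard.ge.trans (card_le_card hsub)

lemma nth_le_nth_of_subset {s t : Finset ℕ} (hst : s ⊆ t) {i : ℕ} (h1 : 1 ≤ i)
    (h2 : i ≤ s.card) : nth t i ≤ nth s i :=
  nth_le_of_le_card_filter t h1 ((le_card_filter_le_nth s h1 h2).trans
    (card_le_card (filter_subset_filter _ hst)))

lemma exists_subset_card_eq_nth_eq (A : Finset ℕ) {m : ℕ} (hm : m ≤ A.card) :
    ∃ A' ⊆ A, A'.card = m ∧ ∀ i, 1 ≤ i → i ≤ m → nth A' i = nth A i := by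
  have hlen : (A.sort (· ≤ ·)).length = A.card := length_sort _
  have hnd : ((A.sort (· ≤ ·)).take m).Nodup :=
    (A.sort_nodup (· ≤ ·)).sublist (List.take_sublist _ _)
  have hsort : ((A.sort (· ≤ ·)).take m).toFinset.sort (· ≤ ·) = (A.sort (· ≤ ·)).take m :=
    (List.toFinset_sort _ hnd).2 ((A.pairwise_sort (· ≤ ·)).sublist (List.take_sublist _ _))
  refine ⟨((A.sort (· ≤ ·)).take m).toFinset, fun y hy => ?_, ?_, fun i h1 h2 => ?_⟩
  · exact (mem_sort _).1 (List.mem_of_mem_take (List.mem_toFinset.1 hy))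
  · rw [List.toFinset_card_of_nodup hnd, List.length_take]; omega
  · unfold nth
    rw [hsort, List.getD_eq_getElem _ _ (by rw [List.length_take]; omega),
      List.getD_eq_getElem _ _ (by omega), List.getElem_take]

lemma preceq_of_eLE_of_subset {G' G S : Finset ℕ} (hG : eLE G' G) (hS : G' ⊆ S) :
    preceq S G :=
  ⟨hG.1 ▸ card_le_card hS, fun i h1 h2 =>
    (nth_le_nth_of_subset hS h1 (hG.1 ▸ h2)).trans (hG.2 i h1 h2)⟩

lemma exists_subset_eLE_of_preceq {S G : Finset ℕ} (h : preceq S G) :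
    ∃ S' ⊆ S, eLE S' G := by
  obtain ⟨S', hS'S, hcard, hnth⟩ := exists_subset_card_eq_nth_eq S h.1
  exact ⟨S', hS'S, hcard, fun i h1 h2 => hnth i h1 h2 ▸ h.2 i h1 h2⟩

lemma Finset.exists_disjoint_supersets_card_eq {α : Type*} [DecidableEq α]
    {s t u : Finset α} {a b : ℕ} (hs : s ⊆ u) (ht : t ⊆ u) (hst : Disjoint s t)
    (ha : s.card ≤ a) (hb : t.card ≤ b) (hab : a + b ≤ u.card) :
    ∃ A B, s ⊆ A ∧ A ⊆ u ∧ A.card = a ∧ t ⊆ B ∧ B ⊆ u ∧ B.card = b ∧ Disjoint A B := by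
  obtain ⟨A, hsA, hAu, hA⟩ := exists_subsuperset_card_eq (subset_sdiff.2 ⟨hs, hst⟩) ha
    (by rw [card_sdiff_of_subset ht]; omega)
  have htA : Disjoint t A := disjoint_of_subset_right hAu disjoint_sdiff
  obtain ⟨B, htB, hBu, hB⟩ := exists_subsuperset_card_eq (subset_sdiff.2 ⟨ht, htA⟩) hb
    (by rw [card_sdiff_of_subset (hAu.trans sdiff_subset)]; omega)
  exact ⟨A, B, hsA, hAu.trans sdiff_subset, hA, htB, hBu.trans sdiff_subset, hB,
    disjoint_of_subset_right hBu disjoint_sdiff⟩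

theorem stmt8_general (n k : ℕ) (hn : 2 * k ≤ n) (𝒢 : Set (Finset ℕ))
    (h𝒢 : ∀ G ∈ 𝒢, G ⊆ Finset.Icc 1 n ∧ G.card ≤ k) :
    IsIntersecting (Fam n k 𝒢) ↔ ∀ G ∈ 𝒢, ∀ H ∈ 𝒢, sInt n G H := by
  constructor
  · intro hF G hG H hH G' H' hG'n hH'n hG'G hH'H
    by_contra hdisj
    rw [not_nonempty_iff_eq_empty, ← disjoint_iff_inter_eq_empty] at hdisj
    obtain ⟨A, B, hG'A, hAn, hA, hH'B, hBn, hB, hAB⟩ :=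
      exists_disjoint_supersets_card_eq hG'n hH'n hdisj (hG'G.1 ▸ (h𝒢 G hG).2)
        (hH'H.1 ▸ (h𝒢 H hH).2) (by simp only [Nat.card_Icc]; omega)
    obtain ⟨x, hx⟩ := hF A ⟨hAn, hA, G, hG, preceq_of_eLE_of_subset hG'G hG'A⟩
      B ⟨hBn, hB, H, hH, preceq_of_eLE_of_subset hH'H hH'B⟩
    exact disjoint_left.1 hAB (mem_inter.1 hx).1 (mem_inter.1 hx).2
  · rintro hsi A ⟨hAn, -, G, hG, hAG⟩ B ⟨hBn, -, H, hH, hBH⟩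
    obtain ⟨A', hA'A, hA'G⟩ := exists_subset_eLE_of_preceq hAG
    obtain ⟨B', hB'B, hB'H⟩ := exists_subset_eLE_of_preceq hBH
    exact (hsi G hG H hH A' B' (hA'A.trans hAn) (hB'B.trans hBn) hA'G hB'H).mono
      (inter_subset_inter hA'A hB'B)

theorem stmt8 (n k : ℕ) (h4 : 4 ≤ 2 * k) (hn : 2 * k ≤ n) (𝒢 : Set (Finset ℕ))
    (h𝒢 : ∀ G ∈ 𝒢, G ⊆ Finset.Icc 1 n ∧ G.card ≤ k) :
    IsIntersecting (Fam n k 𝒢) ↔ ∀ G ∈ 𝒢, ∀ H ∈ 𝒢, sInt n G H :=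
  stmt8_general n k hn 𝒢 h𝒢
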